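/- Let P be a Markov transition kernel on (X,B) with invariant probability measure π, μ a probability measure, θ ∈ [0,1), Q = θP + (1−θ)μ, and π_Q = (1−θ) Σ_{i=0}^∞ θ^i μP^i. Suppose ⦀P^n − π⦀_{V^α} ≤ C0 ρ^n for all n (ρ ∈ (0,1)) and μ(V^α) < ∞. Then for every g with |g|_{V^α} < ∞ and every k ≥ 0, writing ḡ = g − π(g): Q^k g − π_Q(g) = θ^k P^k ḡ − (1−θ) Σ_{i=k}^∞ θ^i μ(P^i ḡ). -/

import Mathlib

/-!
Each step of `Q` either moves by `P` or restarts from `μ`, so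
`Q^k(x,·) = θ^k P^k(x,·) + (1-θ) Σ_{i<k} θ^i μP^i`. Integrating `g`, these `k` restart terms
cancel the first `k` terms of `π_Q(g)`, and the constant `π(g)` drops out because
`θ^k = (1-θ) Σ_{i≥k} θ^i`. All integrals involved are finite: testing the convergence bound on
the truncations `min(V^α, m)` gives `π(V^α) < ∞` and `P^n(V^α)(z) ≤ π(V^α) + |C0| V(z)^α`
uniformly in `n`.
-/
open MeasureTheory Filter
open scoped ENNReal

namespace MixtureKernelIdentity

variable {X : Type*} [MeasurableSpace X]

/-- `iter P n` is the `n`-step transition kernel `P^n`. -/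
noncomputable def iter (P : X → Measure X) : ℕ → X → Measure X
  | 0 => fun x => Measure.dirac x
  | n + 1 => fun x => (iter P n x).bind P

/-- The mixture kernel `Q(x,·) = θ P(x,·) + (1−θ) μ(·)`. -/
noncomputable def mixK (P : X → Measure X) (μ : Measure X) (θ : ℝ) : X → Measure X :=
  fun x => ENNReal.ofReal θ • P x + ENNReal.ofReal (1 - θ) • μ

/-- The measure `π_Q = (1−θ) Σ_{i=0}^∞ θ^i μP^i`. -/
noncomputable def piQ (P : X → Measure X) (μ : Measure X) (θ : ℝ) : Measure X :=
  ENNReal.ofReal (1 - θ) •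
    Measure.sum (fun i : ℕ => ENNReal.ofReal θ ^ i • μ.bind (iter P i))

section Kernel

variable {P : X → Measure X}

lemma measurable_iter (hP : Measurable P) : ∀ n, Measurable (iter P n)
  | 0 => Measure.measurable_dirac
  | n + 1 => (Measure.measurable_bind' hP).comp (measurable_iter hP n)

lemma isProbabilityMeasure_iter (hP : Measurable P) (hPp : ∀ x, IsProbabilityMeasure (P x)) :
    ∀ n x, IsProbabilityMeasure (iter P n x)
  | 0, x => inferInstanceAs (IsProbabilityMeasure (Measure.dirac x))
  | n + 1, x =>
    have := isProbabilityMeasure_iter hP hPp n x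
    isProbabilityMeasure_bind hP.aemeasurable (ae_of_all _ hPp)

lemma isProbabilityMeasure_bind_iter (hP : Measurable P) (hPp : ∀ x, IsProbabilityMeasure (P x))
    (μ : Measure X) [IsProbabilityMeasure μ] (n : ℕ) : IsProbabilityMeasure (μ.bind (iter P n)) :=
  isProbabilityMeasure_bind (measurable_iter hP n).aemeasurable
    (ae_of_all _ (isProbabilityMeasure_iter hP hPp n))

lemma bind_bind_iter (hP : Measurable P) (ν : Measure X) (n : ℕ) :
    (ν.bind (iter P n)).bind P = ν.bind (iter P (n + 1)) :=
  Measure.bind_bind (measurable_iter hP n).aemeasurable hP.aemeasurable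

lemma bind_iter_zero (ν : Measure X) : ν.bind (iter P 0) = ν :=
  Measure.bind_dirac

lemma bind_add_left (ν₁ ν₂ : Measure X) {f : X → Measure X} (hf : Measurable f) :
    (ν₁ + ν₂).bind f = ν₁.bind f + ν₂.bind f := by
  ext s hs
  simp [Measure.bind_apply hs hf.aemeasurable, lintegral_add_measure]

lemma bind_finsetSum_left {ι : Type*} (s : Finset ι) (ν : ι → Measure X) {f : X → Measure X}
    (hf : Measurable f) : (∑ i ∈ s, ν i).bind f = ∑ i ∈ s, (ν i).bind f := by
  classical
  induction s using Finset.induction with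
  | empty => simp
  | insert _ _ hi ih => rw [Finset.sum_insert hi, Finset.sum_insert hi, bind_add_left _ _ hf, ih]

lemma measurable_mixK (hP : Measurable P) (μ : Measure X) (θ : ℝ) :
    Measurable (mixK P μ θ) := by
  refine Measure.measurable_of_measurable_coe _ fun s hs => ?_
  simp only [mixK, Measure.add_apply, Measure.smul_apply, smul_eq_mul]
  exact (((Measure.measurable_coe hs).comp hP).const_mul _).add_const _

lemma bind_mixK (hP : Measurable P) (μ : Measure X) (θ : ℝ)
    (ν : Measure X) [IsProbabilityMeasure ν] :
    ν.bind (mixK P μ θ) = ENNReal.ofReal θ • ν.bind P + ENNReal.ofReal (1 - θ) • μ := by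
  ext s hs
  have hPs : Measurable fun a => P a s := (Measure.measurable_coe hs).comp hP
  simp only [Measure.bind_apply hs (measurable_mixK hP μ θ).aemeasurable,
    Measure.bind_apply hs hP.aemeasurable, mixK, Measure.add_apply, Measure.smul_apply,
    smul_eq_mul]
  rw [lintegral_add_left (hPs.const_mul _), lintegral_const_mul _ hPs, lintegral_const,
    measure_univ, mul_one]

lemma pow_add_sum_mul_pow_eq_one {R : Type*} [CommSemiring R] {a b : R} (hab : a + b = 1)
    (k : ℕ) : a ^ k + ∑ i ∈ Finset.range k, b * a ^ i = 1 := by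
  induction k with
  | zero => simp
  | succ k ih =>
    rw [Finset.sum_range_succ, ← ih]
    conv_rhs => rw [← mul_one (a ^ k), ← hab]
    ring

lemma iter_mixK (hP : Measurable P) (hPp : ∀ x, IsProbabilityMeasure (P x))
    (μ : Measure X) [IsProbabilityMeasure μ] {θ : ℝ} (hθ0 : 0 ≤ θ) (hθ1 : θ ≤ 1)
    (k : ℕ) (x : X) :
    iter (mixK P μ θ) k x = ENNReal.ofReal θ ^ k • iter P k x +
      ∑ i ∈ Finset.range k,
        (ENNReal.ofReal (1 - θ) * ENNReal.ofReal θ ^ i) • μ.bind (iter P i) := by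
  set a := ENNReal.ofReal θ
  set b := ENNReal.ofReal (1 - θ)
  have hab : a + b = 1 := by
    rw [← ENNReal.ofReal_add hθ0 (sub_nonneg.2 hθ1), add_sub_cancel, ENNReal.ofReal_one]
  have hQ := measurable_mixK hP μ θ
  induction k with
  | zero => simp [iter]
  | succ k ih =>
    have := isProbabilityMeasure_iter hP hPp k x
    have hμP : ∀ i,
        (μ.bind (iter P i)).bind (mixK P μ θ) = a • μ.bind (iter P (i + 1)) + b • μ := fun i =>
        have := isProbabilityMeasure_bind_iter hP hPp μ i
        (bind_mixK hP μ θ _).trans (by rw [bind_bind_iter hP])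
    calc iter (mixK P μ θ) (k + 1) x = (iter (mixK P μ θ) k x).bind (mixK P μ θ) := rfl
      _ = a ^ k • (a • iter P (k + 1) x + b • μ) +
          ∑ i ∈ Finset.range k, (b * a ^ i) • (a • μ.bind (iter P (i + 1)) + b • μ) := by
        simp only [ih, bind_add_left _ _ hQ, Measure.bind_smul, bind_finsetSum_left _ _ hQ, hμP,
          bind_mixK hP μ θ (iter P k x)]
        rfl
      _ = a ^ (k + 1) • iter P (k + 1) x +
          ∑ i ∈ Finset.range k, (b * a ^ (i + 1)) • μ.bind (iter P (i + 1)) +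
          ((a ^ k + ∑ i ∈ Finset.range k, b * a ^ i) * b) • μ := by
        simp only [smul_add, Finset.sum_add_distrib, smul_smul, add_mul, Finset.sum_mul, add_smul,
          Finset.sum_smul, mul_assoc, ← pow_succ]
        abel
      _ = _ := by
        rw [pow_add_sum_mul_pow_eq_one hab, one_mul, Finset.sum_range_succ', pow_zero, mul_one,
          bind_iter_zero, add_assoc]

end Kernel

section Weight

variable {W : X → ℝ}

lemma lintegral_ofReal_eq_iSup_integral_min (ν : Measure X) [IsFiniteMeasure ν]
    (hW : Measurable W) (hW0 : ∀ x, 0 ≤ W x) :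
    ∫⁻ y, ENNReal.ofReal (W y) ∂ν = ⨆ m : ℕ, ENNReal.ofReal (∫ y, min (W y) m ∂ν) := by
  have hmin : ∀ (m : ℕ) y, 0 ≤ min (W y) m := fun m y => le_min (hW0 y) m.cast_nonneg
  have hsup : ∀ y, ⨆ m : ℕ, ENNReal.ofReal (min (W y) m) = ENNReal.ofReal (W y) := fun y =>
    le_antisymm (iSup_le fun m => ENNReal.ofReal_le_ofReal (min_le_left _ _))
      (le_iSup_of_le ⌈W y⌉₊ (by rw [min_eq_left (Nat.le_ceil _)]))
  simp_rw [← hsup]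
  rw [lintegral_iSup (fun m => (hW.min measurable_const).ennreal_ofReal)
    fun m m' hm y => ENNReal.ofReal_le_ofReal (min_le_min le_rfl (Nat.cast_le.2 hm))]
  refine iSup_congr fun m => (ofReal_integral_eq_lintegral_ofReal ?_ (ae_of_all _ (hmin m))).symm
  refine Integrable.of_bound (hW.min measurable_const).aestronglyMeasurable m
    (ae_of_all _ fun y => ?_)
  rw [Real.norm_of_nonneg (hmin m y)]
  exact min_le_right _ _

lemma lintegral_ofReal_le_of_integral_le {ν ν' : Measure X} [IsFiniteMeasure ν]
    [IsFiniteMeasure ν'] (hW : Measurable W) (hW0 : ∀ x, 0 ≤ W x) {c : ℝ}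
    (h : ∀ f : X → ℝ, Measurable f → (∀ x, |f x| ≤ W x) → ∫ y, f y ∂ν ≤ ∫ y, f y ∂ν' + c) :
    ∫⁻ y, ENNReal.ofReal (W y) ∂ν ≤ ∫⁻ y, ENNReal.ofReal (W y) ∂ν' + ENNReal.ofReal c := by
  rw [lintegral_ofReal_eq_iSup_integral_min ν hW hW0,
    lintegral_ofReal_eq_iSup_integral_min ν' hW hW0]
  refine iSup_le fun m => ?_
  have hmin : ∀ x, |min (W x) m| ≤ W x := fun x => by
    rw [abs_of_nonneg (le_min (hW0 x) m.cast_nonneg)]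
    exact min_le_left _ _
  calc ENNReal.ofReal (∫ y, min (W y) m ∂ν)
      ≤ ENNReal.ofReal (∫ y, min (W y) m ∂ν' + c) :=
        ENNReal.ofReal_le_ofReal (h _ (hW.min measurable_const) hmin)
    _ ≤ ENNReal.ofReal (∫ y, min (W y) m ∂ν') + ENNReal.ofReal c := ENNReal.ofReal_add_le
    _ ≤ _ := by
        gcongr
        exact le_iSup (fun m : ℕ => ENNReal.ofReal (∫ y, min (W y) m ∂ν')) m

/-- `⦀P^n − π⦀_W ≤ C ρ^n` for all `n`. -/
def GeometricallyErgodic (P : X → Measure X) (π : Measure X) (W : X → ℝ) (C ρ : ℝ) : Prop :=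
  ∀ f : X → ℝ, Measurable f → (∀ x, |f x| ≤ W x) →
    ∀ (n : ℕ) (x : X), |∫ y, f y ∂(iter P n x) - ∫ y, f y ∂π| ≤ C * ρ ^ n * W x

namespace GeometricallyErgodic

variable {P : X → Measure X} {π : Measure X} [IsFiniteMeasure π] {C ρ : ℝ}

lemma lintegral_lt_top (h : GeometricallyErgodic P π W C ρ) (hW : Measurable W)
    (hW0 : ∀ x, 0 ≤ W x) (x : X) : ∫⁻ y, ENNReal.ofReal (W y) ∂π < ⊤ := by
  refine (lintegral_ofReal_le_of_integral_le (ν' := Measure.dirac x) (c := C * W x) hW hW0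
    fun f hf hfW => ?_).trans_lt ?_
  · have := (abs_le.1 (h f hf hfW 0 x)).1
    simp only [iter, pow_zero, mul_one] at this
    linarith
  · rw [lintegral_dirac' x hW.ennreal_ofReal]
    exact ENNReal.add_lt_top.2 ⟨ENNReal.ofReal_lt_top, ENNReal.ofReal_lt_top⟩

lemma lintegral_iter_le (h : GeometricallyErgodic P π W C ρ) (hP : Measurable P)
    (hPp : ∀ x, IsProbabilityMeasure (P x)) (hρ0 : 0 ≤ ρ) (hρ1 : ρ ≤ 1) (hW : Measurable W)
    (hW0 : ∀ x, 0 ≤ W x) (n : ℕ) (z : X) :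
    ∫⁻ y, ENNReal.ofReal (W y) ∂(iter P n z) ≤
      ∫⁻ y, ENNReal.ofReal (W y) ∂π + ENNReal.ofReal (|C| * W z) := by
  have := isProbabilityMeasure_iter hP hPp n z
  refine lintegral_ofReal_le_of_integral_le hW hW0 fun f hf hfW => ?_
  have hCρ : C * ρ ^ n ≤ |C| := by
    calc C * ρ ^ n ≤ |C * ρ ^ n| := le_abs_self _
      _ = |C| * ρ ^ n := by rw [abs_mul, abs_of_nonneg (pow_nonneg hρ0 n)]
      _ ≤ |C| := mul_le_of_le_one_right (abs_nonneg C) (pow_le_one₀ hρ0 hρ1)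
  have := (abs_le.1 (h f hf hfW n z)).2
  have := mul_le_mul_of_nonneg_right hCρ (hW0 z)
  linarith

lemma lintegral_bind_iter_le (h : GeometricallyErgodic P π W C ρ) (hP : Measurable P)
    (hPp : ∀ x, IsProbabilityMeasure (P x)) (hρ0 : 0 ≤ ρ) (hρ1 : ρ ≤ 1) (hW : Measurable W)
    (hW0 : ∀ x, 0 ≤ W x) (μ : Measure X) [IsProbabilityMeasure μ] (n : ℕ) :
    ∫⁻ y, ENNReal.ofReal (W y) ∂(μ.bind (iter P n)) ≤
      ∫⁻ y, ENNReal.ofReal (W y) ∂π + ENNReal.ofReal |C| * ∫⁻ y, ENNReal.ofReal (W y) ∂μ := by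
  rw [Measure.lintegral_bind (measurable_iter hP n).aemeasurable hW.ennreal_ofReal.aemeasurable]
  calc ∫⁻ z, ∫⁻ y, ENNReal.ofReal (W y) ∂(iter P n z) ∂μ
      ≤ ∫⁻ z, (∫⁻ y, ENNReal.ofReal (W y) ∂π + ENNReal.ofReal |C| * ENNReal.ofReal (W z)) ∂μ :=
        lintegral_mono fun z => by
          rw [← ENNReal.ofReal_mul (abs_nonneg C)]
          exact h.lintegral_iter_le hP hPp hρ0 hρ1 hW hW0 n z
    _ = _ := by
        rw [lintegral_add_left measurable_const, lintegral_const, measure_univ, mul_one,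
          lintegral_const_mul _ hW.ennreal_ofReal]

end GeometricallyErgodic

end Weight

section Integrability

variable {W g : X → ℝ} {κ : ℝ}

lemma lintegral_norm_le_of_abs_le_mul (hgW : ∀ x, |g x| ≤ κ * W x) (hW0 : ∀ x, 0 ≤ W x)
    (ν : Measure X) :
    ∫⁻ y, ENNReal.ofReal ‖g y‖ ∂ν ≤ ENNReal.ofReal |κ| * ∫⁻ y, ENNReal.ofReal (W y) ∂ν := by
  rw [← lintegral_const_mul' _ _ ENNReal.ofReal_ne_top]
  refine lintegral_mono fun y => ?_
  rw [← ENNReal.ofReal_mul (abs_nonneg κ), Real.norm_eq_abs]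
  exact ENNReal.ofReal_le_ofReal
    ((hgW y).trans (mul_le_mul_of_nonneg_right (le_abs_self κ) (hW0 y)))

lemma integrable_of_abs_le_mul {ν : Measure X} (hg : AEStronglyMeasurable g ν)
    (hgW : ∀ x, |g x| ≤ κ * W x) (hW0 : ∀ x, 0 ≤ W x)
    (hν : ∫⁻ y, ENNReal.ofReal (W y) ∂ν ≠ ⊤) : Integrable g ν := by
  refine ⟨hg, hasFiniteIntegral_iff_norm g |>.2 ?_⟩
  exact (lintegral_norm_le_of_abs_le_mul hgW hW0 ν).trans_lt
    (ENNReal.mul_lt_top ENNReal.ofReal_lt_top hν.lt_top)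

end Integrability

lemma hasSum_integral_sum_pow_smul {ν : ℕ → Measure X} {g : X → ℝ} (hg : Measurable g)
    {M : ℝ≥0∞} (hM : M ≠ ⊤) (hgM : ∀ i, ∫⁻ y, ENNReal.ofReal ‖g y‖ ∂(ν i) ≤ M)
    {θ : ℝ} (hθ0 : 0 ≤ θ) (hθ1 : θ < 1) :
    HasSum (fun i => θ ^ i * ∫ y, g y ∂(ν i))
      (∫ y, g y ∂(Measure.sum fun i => ENNReal.ofReal θ ^ i • ν i)) := by
  have hint : Integrable g (Measure.sum fun i => ENNReal.ofReal θ ^ i • ν i) := by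
    refine ⟨hg.aestronglyMeasurable, hasFiniteIntegral_iff_norm g |>.2 ?_⟩
    calc ∫⁻ y, ENNReal.ofReal ‖g y‖ ∂(Measure.sum fun i => ENNReal.ofReal θ ^ i • ν i)
        = ∑' i, ENNReal.ofReal θ ^ i * ∫⁻ y, ENNReal.ofReal ‖g y‖ ∂(ν i) := by
          simp only [lintegral_sum_measure, lintegral_smul_measure, smul_eq_mul]
      _ ≤ ∑' i, ENNReal.ofReal θ ^ i * M := by gcongr with i; exact hgM i
      _ = (1 - ENNReal.ofReal θ)⁻¹ * M := by rw [ENNReal.tsum_mul_right, ENNReal.tsum_geometric]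
      _ < ⊤ := ENNReal.mul_lt_top
          (ENNReal.inv_lt_top.2 (tsub_pos_iff_lt.2 (ENNReal.ofReal_lt_one.2 hθ1))) hM.lt_top
  refine (hasSum_integral_measure hint).congr_fun fun i => ?_
  rw [integral_smul_measure, ENNReal.toReal_pow, ENNReal.toReal_ofReal hθ0, smul_eq_mul]

lemma integral_sub_const_of_isProbabilityMeasure {ν : Measure X} [IsProbabilityMeasure ν]
    {g : X → ℝ} (hg : Integrable g ν) (c : ℝ) : ∫ y, (g y - c) ∂ν = ∫ y, g y ∂ν - c := by
  simp [integral_sub hg (integrable_const c)]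

lemma one_sub_mul_tsum_shift_sub_const {θ : ℝ} (hθ0 : 0 ≤ θ) (hθ1 : θ < 1) {a : ℕ → ℝ}
    (ha : Summable fun i => θ ^ i * a i) (c : ℝ) (k : ℕ) :
    (1 - θ) * ∑' i, θ ^ (k + i) * (a (k + i) - c) =
      (1 - θ) * ∑' i, θ ^ i * a i - ∑ i ∈ Finset.range k, (1 - θ) * (θ ^ i * a i) - θ ^ k * c := by
  have hgeo : Summable fun i => θ ^ k * c * θ ^ i :=
    (summable_geometric_of_lt_one hθ0 hθ1).mul_left _
  have htail : Summable fun i => θ ^ (i + k) * a (i + k) := (summable_nat_add_iff k).2 ha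
  have hsplit : ∑' i, θ ^ (k + i) * (a (k + i) - c) =
      ∑' i, θ ^ (i + k) * a (i + k) - ∑' i, θ ^ k * c * θ ^ i := by
    rw [← htail.tsum_sub hgeo]
    exact tsum_congr fun i => by rw [add_comm k i, pow_add]; ring
  rw [hsplit, ← ha.sum_add_tsum_nat_add k, tsum_mul_left, tsum_geometric_of_lt_one hθ0 hθ1,
    ← Finset.mul_sum]
  field_simp [(sub_pos.2 hθ1).ne']
  ring

lemma integral_iter_mixK {P : X → Measure X} (hP : Measurable P)
    (hPp : ∀ x, IsProbabilityMeasure (P x)) (μ : Measure X) [IsProbabilityMeasure μ] {θ : ℝ}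
    (hθ0 : 0 ≤ θ) (hθ1 : θ ≤ 1) {g : X → ℝ} (k : ℕ) (x : X) (hgk : Integrable g (iter P k x))
    (hgμ : ∀ i, Integrable g (μ.bind (iter P i))) :
    ∫ y, g y ∂(iter (mixK P μ θ) k x) = θ ^ k * ∫ y, g y ∂(iter P k x) +
      ∑ i ∈ Finset.range k, (1 - θ) * (θ ^ i * ∫ y, g y ∂(μ.bind (iter P i))) := by
  have hsum : ∀ i ∈ Finset.range k,
      Integrable g ((ENNReal.ofReal (1 - θ) * ENNReal.ofReal θ ^ i) • μ.bind (iter P i)) :=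
    fun i _ => (hgμ i).smul_measure (by finiteness)
  rw [iter_mixK hP hPp μ hθ0 hθ1, integral_add_measure (hgk.smul_measure (by finiteness))
    (integrable_finsetSum_measure.2 hsum), integral_finsetSum_measure hsum]
  simp only [integral_smul_measure, ENNReal.toReal_mul, ENNReal.toReal_pow,
    ENNReal.toReal_ofReal hθ0, ENNReal.toReal_ofReal (sub_nonneg.2 hθ1), smul_eq_mul, mul_assoc]

theorem mixture_kernel_expansion_general
    (P : X → Measure X) (hPmeas : Measurable P)
    (hPprob : ∀ x, IsProbabilityMeasure (P x))
    (π : Measure X) (hπ : IsProbabilityMeasure π)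
    (V : X → ℝ) (hVmeas : Measurable V) (hV1 : ∀ x, 1 ≤ V x)
    (α : ℝ)
    (ρ C0 : ℝ) (hρ0 : 0 < ρ) (hρ1 : ρ < 1)
    -- `⦀P^n − π⦀_{V^α} ≤ C0 ρ^n` for all `n ≥ 0`
    (hA : ∀ f : X → ℝ, Measurable f → (∀ x, |f x| ≤ V x ^ α) →
      ∀ (n : ℕ) (x : X),
        |∫ y, f y ∂(iter P n x) - ∫ y, f y ∂π| ≤ C0 * ρ ^ n * V x ^ α)
    (μ : Measure X) (hμ : IsProbabilityMeasure μ)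
    -- `μ(V^α) < ∞`
    (hμV : ∫⁻ x, ENNReal.ofReal (V x ^ α) ∂μ < ⊤)
    (θ : ℝ) (hθ0 : 0 ≤ θ) (hθ1 : θ < 1) :
    ∀ (g : X → ℝ) (κg : ℝ), Measurable g → (∀ x, |g x| ≤ κg * V x ^ α) →
      ∀ (k : ℕ) (x : X),
        ∫ y, g y ∂(iter (mixK P μ θ) k x) - ∫ y, g y ∂(piQ P μ θ) =
          θ ^ k * ∫ y, (g y - ∫ z, g z ∂π) ∂(iter P k x) -
            (1 - θ) *
              ∑' i : ℕ, θ ^ (k + i) *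
                ∫ y, (g y - ∫ z, g z ∂π) ∂(μ.bind (iter P (k + i))) := by
  intro g κg hg hgV k x
  have hA : GeometricallyErgodic P π (fun y => V y ^ α) C0 ρ := hA
  have hW : Measurable fun y => V y ^ α := hVmeas.pow_const α
  have hW0 : ∀ y, 0 ≤ V y ^ α := fun y => Real.rpow_nonneg (zero_le_one.trans (hV1 y)) α
  have hπV := hA.lintegral_lt_top hW hW0 x
  have hμPV n := hA.lintegral_bind_iter_le hPmeas hPprob hρ0.le hρ1.le hW hW0 μ n
  have hK : ∫⁻ y, ENNReal.ofReal (V y ^ α) ∂π +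
      ENNReal.ofReal |C0| * ∫⁻ y, ENNReal.ofReal (V y ^ α) ∂μ ≠ ⊤ :=
    ENNReal.add_ne_top.2 ⟨hπV.ne, ENNReal.mul_ne_top ENNReal.ofReal_ne_top hμV.ne⟩
  have hgk : Integrable g (iter P k x) :=
    integrable_of_abs_le_mul hg.aestronglyMeasurable hgV hW0
      ((hA.lintegral_iter_le hPmeas hPprob hρ0.le hρ1.le hW hW0 k x).trans_lt (by finiteness)).ne
  have hgμ i : Integrable g (μ.bind (iter P i)) :=
    integrable_of_abs_le_mul hg.aestronglyMeasurable hgV hW0 (ne_top_of_le_ne_top hK (hμPV i))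
  have hS := hasSum_integral_sum_pow_smul hg (by finiteness : ENNReal.ofReal |κg| * _ ≠ ⊤)
    (fun i => (lintegral_norm_le_of_abs_le_mul hgV hW0 _).trans (mul_le_mul_right (hμPV i) _))
    hθ0 hθ1
  have hπQ : ∫ y, g y ∂(piQ P μ θ) =
      (1 - θ) * ∑' i, θ ^ i * ∫ y, g y ∂(μ.bind (iter P i)) := by
    rw [piQ, integral_smul_measure, hS.tsum_eq, ENNReal.toReal_ofReal (by linarith), smul_eq_mul]
  have := isProbabilityMeasure_iter hPmeas hPprob k x
  have := isProbabilityMeasure_bind_iter hPmeas hPprob μ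
  simp only [integral_sub_const_of_isProbabilityMeasure (hgμ _),
    integral_sub_const_of_isProbabilityMeasure hgk]
  rw [integral_iter_mixK hPmeas hPprob μ hθ0 hθ1.le k x hgk hgμ, hπQ,
    one_sub_mul_tsum_shift_sub_const hθ0 hθ1 hS.summable]
  ring

/-- Let `P` have invariant probability `π` with
`⦀P^n − π⦀_{V^α} ≤ C0 ρ^n`, let `μ` be a probability measure with `μ(V^α) < ∞`, `θ ∈ [0,1)`,
`Q = θP + (1−θ)μ` and `π_Q = (1−θ) Σ_{i≥0} θ^i μP^i`.  Then for every `g` with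
`|g|_{V^α} < ∞` and every `k ≥ 0`, writing `ḡ = g − π(g)`:
`Q^k g − π_Q(g) = θ^k P^k ḡ − (1−θ) Σ_{i=k}^∞ θ^i μ(P^i ḡ)` (as functions of `x`). -/
theorem mixture_kernel_expansion
    (P : X → Measure X) (hPmeas : Measurable P)
    (hPprob : ∀ x, IsProbabilityMeasure (P x))
    (π : Measure X) (hπ : IsProbabilityMeasure π) (hinv : π.bind P = π)
    (V : X → ℝ) (hVmeas : Measurable V) (hV1 : ∀ x, 1 ≤ V x)
    (α : ℝ) (hα0 : 0 ≤ α) (hα1 : α ≤ 1)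
    (ρ C0 : ℝ) (hρ0 : 0 < ρ) (hρ1 : ρ < 1) (hC0 : 0 ≤ C0)
    -- `⦀P^n − π⦀_{V^α} ≤ C0 ρ^n` for all `n ≥ 0`
    (hA : ∀ f : X → ℝ, Measurable f → (∀ x, |f x| ≤ V x ^ α) →
      ∀ (n : ℕ) (x : X),
        |∫ y, f y ∂(iter P n x) - ∫ y, f y ∂π| ≤ C0 * ρ ^ n * V x ^ α)
    (μ : Measure X) (hμ : IsProbabilityMeasure μ)
    -- `μ(V^α) < ∞`
    (hμV : ∫⁻ x, ENNReal.ofReal (V x ^ α) ∂μ < ⊤)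
    (θ : ℝ) (hθ0 : 0 ≤ θ) (hθ1 : θ < 1) :
    ∀ (g : X → ℝ) (κg : ℝ), Measurable g → (∀ x, |g x| ≤ κg * V x ^ α) →
      ∀ (k : ℕ) (x : X),
        ∫ y, g y ∂(iter (mixK P μ θ) k x) - ∫ y, g y ∂(piQ P μ θ) =
          θ ^ k * ∫ y, (g y - ∫ z, g z ∂π) ∂(iter P k x) -
            (1 - θ) *
              ∑' i : ℕ, θ ^ (k + i) *
                ∫ y, (g y - ∫ z, g z ∂π) ∂(μ.bind (iter P (k + i))) :=
  mixture_kernel_expansion_general P hPmeas hPprob π hπ V hVmeas hV1 α ρ C0 hρ0 hρ1 hA μ hμ hμV θ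
    hθ0 hθ1

end MixtureKernelIdentity
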